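/- arXiv:1509.05870 — 5 statements merged into one kernel-verified Lean document; each statement's English description precedes it below -/
import Mathlib

section
/- If a graph G contains a vertex v with exactly two neighbors n₁ and n₂ such that {n₁, n₂} is an edge of G (a triangle), then there exists a minimum vertex cover of G that contains both n₁ and n₂. -/
open Finset

variable {V : Type*}

def IsVC (G : SimpleGraph V) (C : Finset V) : Prop :=
  ∀ ⦃u v : V⦄, G.Adj u v → u ∈ C ∨ v ∈ C

def IsMinVC (G : SimpleGraph V) (C : Finset V) : Prop :=
  IsVC G C ∧ ∀ D : Finset V, IsVC G D → C.card ≤ D.card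

variable [Fintype V] [DecidableEq V] (G : SimpleGraph V) [DecidableRel G.Adj]

def uncov (C : Finset V) : Finset (Sym2 V) :=
  G.edgeFinset.filter (fun e => ∀ x ∈ e, x ∉ C)

def gain (C : Finset V) (v : V) : ℕ :=
  ((uncov G C).filter (fun e => v ∈ e)).card

def loss (C : Finset V) (v : V) : ℕ :=
  ((uncov G (C.erase v)).filter (fun e => v ∈ e)).card

noncomputable def minVCcard {W : Type*} (G : SimpleGraph W) : ℕ :=
  sInf {n | ∃ C : Finset W, IsVC G C ∧ C.card = n}


lemma swap_vc (v a b : V)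
    (hN : G.neighborFinset v = {a, b}) (C : Finset V) (hC : IsVC G C)
    (ha : a ∈ C) (hb : b ∉ C) :
    ∃ C' : Finset V, IsVC G C' ∧ C'.card = C.card ∧ a ∈ C' ∧ b ∈ C' := by
  have hvb : G.Adj v b := by
    rw [← SimpleGraph.mem_neighborFinset, hN]; simp
  have hva : G.Adj v a := by
    rw [← SimpleGraph.mem_neighborFinset, hN]; simp
  have hv : v ∈ C := by
    rcases hC hvb with h | h
    · exact h
    · exact absurd h hb
  have hav : a ≠ v := fun h => G.irrefl (h ▸ hva.symm)
  refine ⟨insert b (C.erase v), ?_, ?_, ?_, mem_insert_self _ _⟩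
  · intro u w huw
    rcases hC huw with h | h
    · by_cases huv : u = v
      · subst huv
        have : w ∈ G.neighborFinset u := by rwa [SimpleGraph.mem_neighborFinset]
        rw [hN] at this
        simp only [mem_insert, mem_singleton] at this
        rcases this with rfl | rfl
        · exact Or.inr (mem_insert_of_mem (mem_erase.mpr ⟨hav, ha⟩))
        · exact Or.inr (mem_insert_self _ _)
      · exact Or.inl (mem_insert_of_mem (mem_erase.mpr ⟨huv, h⟩))
    · by_cases hwv : w = v
      · subst hwv
        have : u ∈ G.neighborFinset w := by
          rwa [SimpleGraph.mem_neighborFinset, SimpleGraph.adj_comm]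
        rw [hN] at this
        simp only [mem_insert, mem_singleton] at this
        rcases this with rfl | rfl
        · exact Or.inl (mem_insert_of_mem (mem_erase.mpr ⟨hav, ha⟩))
        · exact Or.inl (mem_insert_self _ _)
      · exact Or.inr (mem_insert_of_mem (mem_erase.mpr ⟨hwv, h⟩))
  · rw [card_insert_of_notMem (fun h => hb (mem_of_mem_erase h)),
      card_erase_of_mem hv]
    have : 1 ≤ C.card := card_pos.mpr ⟨v, hv⟩
    omega
  · exact mem_insert_of_mem (mem_erase.mpr ⟨hav, ha⟩)

theorem degree2_triangle_rule (v n₁ n₂ : V) (hne : n₁ ≠ n₂)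
    (hN : G.neighborFinset v = {n₁, n₂}) (hadj : G.Adj n₁ n₂) :
    ∃ C : Finset V, IsMinVC G C ∧ n₁ ∈ C ∧ n₂ ∈ C := by
  have hS : {n | ∃ C : Finset V, IsVC G C ∧ C.card = n}.Nonempty :=
    ⟨(Finset.univ : Finset V).card, Finset.univ, fun u w _ => Or.inl (mem_univ u), rfl⟩
  obtain ⟨C, hC, hcard⟩ := Nat.sInf_mem hS
  have hmin : ∀ D : Finset V, IsVC G D → C.card ≤ D.card := fun D hD =>
    hcard ▸ Nat.sInf_le ⟨D, hD, rfl⟩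
  by_cases h1 : n₁ ∈ C <;> by_cases h2 : n₂ ∈ C
  · exact ⟨C, ⟨hC, hmin⟩, h1, h2⟩
  · obtain ⟨C', hC', hcc, ha, hb⟩ := swap_vc G v n₁ n₂ hN C hC h1 h2
    exact ⟨C', ⟨hC', fun D hD => hcc ▸ hmin D hD⟩, ha, hb⟩
  · have hN' : G.neighborFinset v = {n₂, n₁} := by rw [hN, pair_comm]
    obtain ⟨C', hC', hcc, ha, hb⟩ := swap_vc G v n₂ n₁ hN' C hC h2 h1
    exact ⟨C', ⟨hC', fun D hD => hcc ▸ hmin D hD⟩, hb, ha⟩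
  · rcases hC hadj with h | h
    · exact absurd h h1
    · exact absurd h h2
end

section
/- If a graph G contains two distinct vertices u and v with N(u) = N(v) = {n₁, n₂} where {n₁, n₂} is not an edge of G (a quadrilateral configuration), then there exists a minimum vertex cover of G that contains both n₁ and n₂. -/
open Finset

variable {V : Type*}

variable [Fintype V] [DecidableEq V] (G : SimpleGraph V) [DecidableRel G.Adj]

theorem degree2_quadrilateral_rule (u v n₁ n₂ : V) (huv : u ≠ v) (hne : n₁ ≠ n₂)
    (hu : u ∉ ({n₁, n₂} : Finset V)) (hv : v ∉ ({n₁, n₂} : Finset V))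
    (hNu : G.neighborFinset u = {n₁, n₂}) (hNv : G.neighborFinset v = {n₁, n₂})
    (hnadj : ¬ G.Adj n₁ n₂) :
    ∃ C : Finset V, IsMinVC G C ∧ n₁ ∈ C ∧ n₂ ∈ C := by
  classical
  have hn1u : G.Adj u n₁ := by
    rw [← SimpleGraph.mem_neighborFinset, hNu]; simp
  have hn2u : G.Adj u n₂ := by
    rw [← SimpleGraph.mem_neighborFinset, hNu]; simp
  have hn1v : G.Adj v n₁ := by
    rw [← SimpleGraph.mem_neighborFinset, hNv]; simp
  obtain ⟨C, hC, hcard⟩ :=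
    Nat.sInf_mem (⟨(Finset.univ : Finset V).card, Finset.univ,
      fun a b _ => Or.inl (mem_univ a), rfl⟩ :
      ∃ n, n ∈ {n | ∃ C : Finset V, IsVC G C ∧ C.card = n})
  have hmin : ∀ D, IsVC G D → C.card ≤ D.card := by
    intro D hD
    rw [hcard]; exact Nat.sInf_le ⟨D, hD, rfl⟩
  by_cases hb : n₁ ∈ C ∧ n₂ ∈ C
  · exact ⟨C, ⟨hC, hmin⟩, hb.1, hb.2⟩
  · have huC : u ∈ C := by
      rcases hC hn1u with h | h
      · exact h
      rcases hC hn2u with h' | h'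
      · exact h'
      exact absurd ⟨h, h'⟩ hb
    have hvC : v ∈ C := by
      rcases hC hn1v with h | h
      · exact h
      rcases hC (by rw [← SimpleGraph.mem_neighborFinset, hNv]; simp :
        G.Adj v n₂) with h' | h'
      · exact h'
      exact absurd ⟨h, h'⟩ hb
    simp only [mem_insert, mem_singleton, not_or] at hu hv
    set X := (C.erase u).erase v with hX
    set C' := insert n₁ (insert n₂ X) with hC'def
    have hvX : v ∈ C.erase u := mem_erase.mpr ⟨huv.symm, hvC⟩
    have hXcard : X.card = C.card - 2 := by
      rw [hX, card_erase_of_mem hvX, card_erase_of_mem huC]; omega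
    have hC2 : 2 ≤ C.card := by
      have := one_lt_card.mpr ⟨u, huC, v, hvC, huv⟩
      omega
    have hcardle : C'.card ≤ C.card := by
      have h1 : C'.card ≤ (insert n₂ X).card + 1 := card_insert_le _ _
      have h2 : (insert n₂ X).card ≤ X.card + 1 := card_insert_le _ _
      omega
    have hmem : ∀ a b : V, G.Adj a b → a ∈ C → a ∈ C' ∨ b ∈ C' := by
      intro a b hab haC
      by_cases hau : a = u
      · subst hau
        have hbm : b ∈ ({n₁, n₂} : Finset V) := by
          rw [← hNu, SimpleGraph.mem_neighborFinset]; exact hab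
        simp only [mem_insert, mem_singleton] at hbm
        right
        rcases hbm with rfl | rfl <;> simp [hC'def]
      · by_cases hav : a = v
        · subst hav
          have hbm : b ∈ ({n₁, n₂} : Finset V) := by
            rw [← hNv, SimpleGraph.mem_neighborFinset]; exact hab
          simp only [mem_insert, mem_singleton] at hbm
          right
          rcases hbm with rfl | rfl <;> simp [hC'def]
        · left
          have : a ∈ X := mem_erase.mpr ⟨hav, mem_erase.mpr ⟨hau, haC⟩⟩
          simp [hC'def, this]
    have hVC' : IsVC G C' := by
      intro a b hab
      rcases hC hab with h | h
      · exact hmem a b hab h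
      · exact (hmem b a hab.symm h).symm
    refine ⟨C', ⟨hVC', fun D hD => le_trans hcardle (hmin D hD)⟩, ?_, ?_⟩
    · simp [hC'def]
    · simp [hC'def]
end

section
/- If u is a vertex of degree 1 with unique neighbor v, then the minimum vertex cover size of G equals 1 plus the minimum vertex cover size of the graph G' obtained from G by deleting u and v (and all edges incident to them). -/
open Finset

variable {V : Type*}

variable [Fintype V] [DecidableEq V] (G : SimpleGraph V) [DecidableRel G.Adj]

theorem degree1_reduction (u v : V) (h : G.neighborFinset u = {v}) :
    minVCcard G = 1 + minVCcard (G.induce {x : V | x ≠ u ∧ x ≠ v}) := by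
  classical
  have hadj : G.Adj u v := by
    rw [← SimpleGraph.mem_neighborFinset, h]; exact Finset.mem_singleton_self v
  have hne : u ≠ v := hadj.ne
  set s : Set V := {x : V | x ≠ u ∧ x ≠ v} with hs
  set G' := G.induce s with hG'
  have hS : {n | ∃ C : Finset V, IsVC G C ∧ C.card = n}.Nonempty :=
    ⟨_, Finset.univ, fun a b _ => Or.inl (mem_univ a), rfl⟩
  have hS' : {n | ∃ C : Finset s, IsVC G' C ∧ C.card = n}.Nonempty :=
    ⟨_, Finset.univ, fun a b _ => Or.inl (mem_univ a), rfl⟩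
  let valEmb : s ↪ V := ⟨Subtype.val, Subtype.val_injective⟩
  unfold minVCcard
  apply le_antisymm
  · obtain ⟨C', hC', hcard⟩ := Nat.sInf_mem hS'
    have hvnot : v ∉ C'.map valEmb := by
      intro hv
      obtain ⟨x, _, hx⟩ := Finset.mem_map.mp hv
      exact x.2.2 hx
    have hVC : IsVC G (insert v (C'.map valEmb)) := by
      intro a b hab
      by_cases hav : a = v
      · subst hav; exact Or.inl (Finset.mem_insert_self _ _)
      by_cases hbv : b = v
      · subst hbv; exact Or.inr (Finset.mem_insert_self _ _)
      by_cases hau : a = u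
      · exfalso
        have : b ∈ G.neighborFinset u := by
          rw [SimpleGraph.mem_neighborFinset]; exact hau ▸ hab
        rw [h, Finset.mem_singleton] at this
        exact hbv this
      by_cases hbu : b = u
      · exfalso
        have : a ∈ G.neighborFinset u := by
          rw [SimpleGraph.mem_neighborFinset]; exact hbu ▸ hab.symm
        rw [h, Finset.mem_singleton] at this
        exact hav this
      · have ha : a ∈ s := ⟨hau, hav⟩
        have hb : b ∈ s := ⟨hbu, hbv⟩
        have hG'adj : G'.Adj ⟨a, ha⟩ ⟨b, hb⟩ := hab
        rcases hC' hG'adj with hm | hm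
        · exact Or.inl (Finset.mem_insert_of_mem
            (Finset.mem_map.mpr ⟨⟨a, ha⟩, hm, rfl⟩))
        · exact Or.inr (Finset.mem_insert_of_mem
            (Finset.mem_map.mpr ⟨⟨b, hb⟩, hm, rfl⟩))
    exact Nat.sInf_le ⟨_, hVC, by
      rw [Finset.card_insert_of_notMem hvnot, Finset.card_map, hcard,
        Nat.add_comm]⟩
  · obtain ⟨C, hC, hcard⟩ := Nat.sInf_mem hS
    set D : Finset s := Finset.univ.filter (fun x => (x : V) ∈ C) with hD
    have hDVC : IsVC G' D := by
      intro a b hab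
      have hab' : G.Adj (a : V) (b : V) := hab
      rcases hC hab' with hm | hm
      · exact Or.inl (Finset.mem_filter.mpr ⟨Finset.mem_univ _, hm⟩)
      · exact Or.inr (Finset.mem_filter.mpr ⟨Finset.mem_univ _, hm⟩)
    obtain ⟨w, hwC, hws⟩ : ∃ w, w ∈ C ∧ w ∉ s := by
      rcases hC hadj with hm | hm
      · exact ⟨u, hm, fun hw => hw.1 rfl⟩
      · exact ⟨v, hm, fun hw => hw.2 rfl⟩
    have hsub : D.map valEmb ⊆ C := by
      intro x hx
      obtain ⟨y, hy, hxy⟩ := Finset.mem_map.mp hx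
      exact hxy ▸ (Finset.mem_filter.mp hy).2
    have hwnot : w ∉ D.map valEmb := by
      intro hw
      obtain ⟨y, _, hy⟩ := Finset.mem_map.mp hw
      exact hws (hy ▸ y.2)
    have hlt : D.card < C.card := by
      rw [← Finset.card_map valEmb]
      exact Finset.card_lt_card ⟨hsub, fun hcon => hwnot (hcon hwC)⟩
    have h1 : sInf {n | ∃ C : Finset s, IsVC G' C ∧ C.card = n} ≤ D.card :=
      Nat.sInf_le ⟨_, hDVC, rfl⟩
    omega
end

section
/- If v has exactly two neighbors n₁, n₂ and {n₁, n₂} ∈ E, then the minimum vertex cover size of G equals 2 plus the minimum vertex cover size of the induced subgraph G − {v, n₁, n₂}. -/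
open Finset

variable {V : Type*}

variable [Fintype V] [DecidableEq V] (G : SimpleGraph V) [DecidableRel G.Adj]

theorem degree2_triangle_reduction (v n₁ n₂ : V) (hne : n₁ ≠ n₂)
    (hN : G.neighborFinset v = {n₁, n₂}) (hadj : G.Adj n₁ n₂) :
    minVCcard G = 2 + minVCcard (G.induce {x : V | x ≠ v ∧ x ≠ n₁ ∧ x ≠ n₂}) := by
  classical
  set S : Set V := {x : V | x ≠ v ∧ x ≠ n₁ ∧ x ≠ n₂} with hS
  set G' := G.induce S with hG'
  have h1 : G.Adj v n₁ := by
    rw [← SimpleGraph.mem_neighborFinset, hN]; simp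
  have h2 : G.Adj v n₂ := by
    rw [← SimpleGraph.mem_neighborFinset, hN]; simp
  have hvn1 : v ≠ n₁ := G.ne_of_adj h1
  have hvn2 : v ≠ n₂ := G.ne_of_adj h2
  have hvS : v ∉ S := fun h => h.1 rfl
  have hn1S : n₁ ∉ S := fun h => h.2.1 rfl
  have hn2S : n₂ ∉ S := fun h => h.2.2 rfl
  have hne1 : {n | ∃ C : Finset V, IsVC G C ∧ C.card = n}.Nonempty :=
    ⟨Finset.univ.card, Finset.univ, fun a _ _ => Or.inl (mem_univ a), rfl⟩
  have hne2 : {n | ∃ C : Finset S, IsVC G' C ∧ C.card = n}.Nonempty :=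
    ⟨Finset.univ.card, Finset.univ, fun a _ _ => Or.inl (mem_univ a), rfl⟩
  have hdefG : minVCcard G = sInf {n | ∃ C : Finset V, IsVC G C ∧ C.card = n} := rfl
  have hdefG' : sInf {n | ∃ C : Finset S, IsVC G' C ∧ C.card = n} = minVCcard G' := rfl
  apply le_antisymm
  · -- minVCcard G ≤ 2 + minVCcard G'
    obtain ⟨C', hC', hcard'⟩ := Nat.sInf_mem hne2
    set C : Finset V := (C'.image (fun x : S => (x : V))) ∪ {n₁, n₂} with hC
    have hVC : IsVC G C := by
      intro a b hab
      by_cases han1 : a = n₁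
      · exact Or.inl (by simp [hC, han1])
      by_cases han2 : a = n₂
      · exact Or.inl (by simp [hC, han2])
      by_cases hbn1 : b = n₁
      · exact Or.inr (by simp [hC, hbn1])
      by_cases hbn2 : b = n₂
      · exact Or.inr (by simp [hC, hbn2])
      have hav : a ≠ v := by
        rintro rfl
        have hb : b ∈ G.neighborFinset a := (SimpleGraph.mem_neighborFinset _ _ _).2 hab
        rw [hN] at hb
        simp at hb
        tauto
      have hbv : b ≠ v := by
        rintro rfl
        have ha : a ∈ G.neighborFinset b := (SimpleGraph.mem_neighborFinset _ _ _).2 hab.symm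
        rw [hN] at ha
        simp at ha
        tauto
      have hA : a ∈ S := ⟨hav, han1, han2⟩
      have hB : b ∈ S := ⟨hbv, hbn1, hbn2⟩
      have hadj' : G'.Adj ⟨a, hA⟩ ⟨b, hB⟩ := hab
      rcases hC' hadj' with h | h
      · exact Or.inl (by
          simp only [hC, mem_union]
          exact Or.inl (Finset.mem_image.2 ⟨⟨a, hA⟩, h, rfl⟩))
      · exact Or.inr (by
          simp only [hC, mem_union]
          exact Or.inl (Finset.mem_image.2 ⟨⟨b, hB⟩, h, rfl⟩))
    have hcardC : C.card = C'.card + 2 := by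
      have hdisj : Disjoint (C'.image (fun x : S => (x : V))) ({n₁, n₂} : Finset V) := by
        rw [Finset.disjoint_right]
        intro x hx hx'
        obtain ⟨y, _, rfl⟩ := Finset.mem_image.1 hx'
        simp only [mem_insert, mem_singleton] at hx
        rcases hx with h | h
        · exact hn1S (h ▸ y.2)
        · exact hn2S (h ▸ y.2)
      rw [hC, Finset.card_union_of_disjoint hdisj,
        Finset.card_image_of_injective _ Subtype.val_injective,
        Finset.card_pair hne]
    have hmem : C.card ∈ {n | ∃ C : Finset V, IsVC G C ∧ C.card = n} := ⟨C, hVC, rfl⟩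
    calc minVCcard G ≤ C.card := Nat.sInf_le hmem
    _ = 2 + minVCcard G' := by rw [hcardC, hcard', hdefG']; omega
  · -- 2 + minVCcard G' ≤ minVCcard G
    obtain ⟨C, hC, hcard⟩ := Nat.sInf_mem hne1
    rw [hdefG, ← hcard]
    set C' : Finset S := C.subtype (· ∈ S) with hC'
    have hVC' : IsVC G' C' := by
      rintro ⟨a, hA⟩ ⟨b, hB⟩ hab
      rcases hC hab with h | h
      · exact Or.inl (Finset.mem_subtype.2 h)
      · exact Or.inr (Finset.mem_subtype.2 h)
    have hC'card : C'.card = (C.filter (· ∈ S)).card := Finset.card_subtype _ _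
    have htwo : 2 ≤ (C.filter (fun x => x ∉ S)).card := by
      have key : ∀ a b : V, a ∈ C → b ∈ C → a ≠ b → a ∉ S → b ∉ S →
          2 ≤ (C.filter (fun x => x ∉ S)).card := by
        intro a b haC hbC hab haS hbS
        have hsub : ({a, b} : Finset V) ⊆ C.filter (fun x => x ∉ S) := by
          intro x hx
          simp only [mem_insert, mem_singleton] at hx
          rcases hx with rfl | rfl <;> simp [Finset.mem_filter, haC, hbC, haS, hbS]
        calc 2 = ({a, b} : Finset V).card := (Finset.card_pair hab).symm
        _ ≤ _ := Finset.card_le_card hsub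
      rcases hC hadj with hn1 | hn2
      · rcases hC h2 with hv | hn2
        · exact key v n₁ hv hn1 hvn1 hvS hn1S
        · exact key n₁ n₂ hn1 hn2 hne hn1S hn2S
      · rcases hC h1 with hv | hn1
        · exact key v n₂ hv hn2 hvn2 hvS hn2S
        · exact key n₁ n₂ hn1 hn2 hne hn1S hn2S
    have hmin' : minVCcard G' ≤ C'.card := Nat.sInf_le ⟨C', hVC', rfl⟩
    have hsplit : (C.filter (· ∈ S)).card + (C.filter (fun x => x ∉ S)).card = C.card :=
      Finset.card_filter_add_card_filter_not _
    omega
end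

section
/- If a set C ⊆ V is built by repeatedly applying only the Degree-1 rule, the Degree-2 triangle rule, and the Degree-2 quadrilateral rule starting from the empty set, and the resulting C is a vertex cover of G, then C is a minimum vertex cover of G. -/
open Finset

variable {V : Type*}

variable [Fintype V] [DecidableEq V] (G : SimpleGraph V) [DecidableRel G.Adj]

inductive Step (G : SimpleGraph V) [DecidableRel G.Adj] : Finset V → Finset V → Prop
  | deg1 (C : Finset V) (u v : V) (hu : u ∉ C) (hg : gain G C u = 1)
      (hv : v ∈ G.neighborFinset u) (hvC : v ∉ C) : Step G C (insert v C)
  | deg2tri (C : Finset V) (v n₁ n₂ : V) (hv : v ∉ C) (hg : gain G C v = 2)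
      (hn₁ : n₁ ∈ G.neighborFinset v) (hn₂ : n₂ ∈ G.neighborFinset v) (hne : n₁ ≠ n₂)
      (hn₁C : n₁ ∉ C) (hn₂C : n₂ ∉ C) (hadj : G.Adj n₁ n₂) :
      Step G C (insert n₁ (insert n₂ C))
  | deg2quad (C : Finset V) (u v n₁ n₂ : V) (huv : u ≠ v) (hu : u ∉ C) (hv : v ∉ C)
      (hgu : gain G C u = 2) (hgv : gain G C v = 2)
      (hn₁u : n₁ ∈ G.neighborFinset u) (hn₂u : n₂ ∈ G.neighborFinset u)
      (hn₁v : n₁ ∈ G.neighborFinset v) (hn₂v : n₂ ∈ G.neighborFinset v)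
      (hne : n₁ ≠ n₂) (hn₁C : n₁ ∉ C) (hn₂C : n₂ ∉ C) (hnadj : ¬ G.Adj n₁ n₂) :
      Step G C (insert n₁ (insert n₂ C))

lemma mem_gainset {C : Finset V} {a b : V} (hab : G.Adj a b) (ha : a ∉ C) (hb : b ∉ C) :
    s(a,b) ∈ (uncov G C).filter (fun e => a ∈ e) := by
  refine Finset.mem_filter.2 ⟨Finset.mem_filter.2 ⟨SimpleGraph.mem_edgeFinset.2
    ((SimpleGraph.mem_edgeSet G).2 hab), ?_⟩, Sym2.mem_iff.2 (Or.inl rfl)⟩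
  intro x hx
  rcases Sym2.mem_iff.1 hx with rfl | rfl <;> assumption

lemma gain2_neighbors {C : Finset V} {v n₁ n₂ b : V} (hg : gain G C v = 2)
    (hv : v ∉ C) (h1 : G.Adj v n₁) (h2 : G.Adj v n₂) (hne : n₁ ≠ n₂)
    (h1C : n₁ ∉ C) (h2C : n₂ ∉ C) (hb : G.Adj v b) (hbC : b ∉ C) :
    b = n₁ ∨ b = n₂ := by
  have e1 := mem_gainset G h1 hv h1C
  have e2 := mem_gainset G h2 hv h2C
  have eb := mem_gainset G hb hv hbC
  have hpair : ({s(v,n₁), s(v,n₂)} : Finset (Sym2 V)) ⊆ (uncov G C).filter (fun e => v ∈ e) := by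
    intro e he
    rcases Finset.mem_insert.1 he with rfl | he
    · exact e1
    · rw [Finset.mem_singleton.1 he]; exact e2
  have hcard : ({s(v,n₁), s(v,n₂)} : Finset (Sym2 V)).card = 2 := by
    rw [Finset.card_insert_of_notMem, Finset.card_singleton]
    simp only [Finset.mem_singleton, Sym2.eq_iff]
    rintro (⟨-, rfl⟩ | ⟨rfl, rfl⟩)
    · exact hne rfl
    · exact G.irrefl h1
  have heq : ((uncov G C).filter (fun e => v ∈ e)) = {s(v,n₁), s(v,n₂)} :=
    (Finset.eq_of_subset_of_card_le hpair (by rw [hcard, ← hg, gain])).symm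
  rw [heq] at eb
  rcases Finset.mem_insert.1 eb with h | h
  · rcases Sym2.eq_iff.1 h with ⟨-, rfl⟩ | ⟨rfl, -⟩
    · exact Or.inl rfl
    · exact absurd h1.symm (G.irrefl ·)
  · rcases Sym2.eq_iff.1 (Finset.mem_singleton.1 h) with ⟨-, rfl⟩ | ⟨rfl, -⟩
    · exact Or.inr rfl
    · exact absurd h2.symm (G.irrefl ·)

lemma gain1_neighbor {C : Finset V} {u v b : V} (hg : gain G C u = 1)
    (hu : u ∉ C) (hv : G.Adj u v) (hvC : v ∉ C) (hb : G.Adj u b) (hbC : b ∉ C) :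
    b = v := by
  have e1 := mem_gainset G hv hu hvC
  have eb := mem_gainset G hb hu hbC
  have := Finset.card_le_one.1 (le_of_eq hg) _ eb _ e1
  rcases Sym2.eq_iff.1 this with ⟨-, rfl⟩ | ⟨rfl, rfl⟩
  · rfl
  · exact absurd hv.symm (G.irrefl ·)

lemma minVC_of_le {M M' : Finset V} (hM : IsMinVC G M) (h' : IsVC G M')
    (hc : M'.card ≤ M.card) : IsMinVC G M' :=
  ⟨h', fun D hD => hc.trans (hM.2 D hD)⟩

lemma exists_minVC : ∃ M : Finset V, IsMinVC G M := by
  classical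
  obtain ⟨M, hM, hmin⟩ := Finset.exists_min_image
    (Finset.univ.filter fun D => IsVC G D) Finset.card
    ⟨Finset.univ, Finset.mem_filter.2 ⟨Finset.mem_univ _, fun u v _ => Or.inl (Finset.mem_univ u)⟩⟩
  exact ⟨M, (Finset.mem_filter.1 hM).2,
    fun D hD => hmin D (Finset.mem_filter.2 ⟨Finset.mem_univ _, hD⟩)⟩

/-- Degree-2 triangle rule, asymmetric auxiliary version. -/
lemma tri_aux {C M : Finset V} {v n₁ n₂ : V} (hMmin : IsMinVC G M) (hCM : C ⊆ M)
    (hv : v ∉ C) (hg : gain G C v = 2) (h1 : G.Adj v n₁) (h2 : G.Adj v n₂) (hne : n₁ ≠ n₂)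
    (h1C : n₁ ∉ C) (h2C : n₂ ∉ C) (h1M : n₁ ∈ M) :
    ∃ M', IsMinVC G M' ∧ insert n₁ (insert n₂ C) ⊆ M' := by
  by_cases h2M : n₂ ∈ M
  · exact ⟨M, hMmin, Finset.insert_subset h1M (Finset.insert_subset h2M hCM)⟩
  · have hvM : v ∈ M := (hMmin.1 h2).resolve_right h2M
    set M' := insert n₂ (M.erase v) with hM'
    have key : ∀ ⦃a b : V⦄, G.Adj a b → a ∈ M → a ∈ M' ∨ b ∈ M' := by
      intro a b hab haM
      by_cases hav : a = v
      · subst hav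
        by_cases hbM : b ∈ M
        · exact Or.inr (Finset.mem_insert_of_mem (Finset.mem_erase.2 ⟨hab.ne', hbM⟩))
        · have hbC : b ∉ C := fun h => hbM (hCM h)
          rcases gain2_neighbors G hg hv h1 h2 hne h1C h2C hab hbC with rfl | rfl
          · exact Or.inr (Finset.mem_insert_of_mem (Finset.mem_erase.2 ⟨h1.ne', h1M⟩))
          · exact Or.inr (Finset.mem_insert_self _ _)
      · exact Or.inl (Finset.mem_insert_of_mem (Finset.mem_erase.2 ⟨hav, haM⟩))
    have hVC' : IsVC G M' := fun a b hab =>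
      (hMmin.1 hab).elim (key hab) (fun h => (key hab.symm h).symm)
    have hcard : M'.card ≤ M.card := by
      have h1le : 1 ≤ M.card := Finset.card_pos.2 ⟨v, hvM⟩
      calc M'.card ≤ (M.erase v).card + 1 := Finset.card_insert_le _ _
        _ = M.card := by rw [Finset.card_erase_of_mem hvM]; omega
    have hCM' : C ⊆ M' := fun c hc =>
      Finset.mem_insert_of_mem (Finset.mem_erase.2 ⟨fun h => hv (h ▸ hc), hCM hc⟩)
    exact ⟨M', minVC_of_le G hMmin hVC' hcard,
      Finset.insert_subset (Finset.mem_insert_of_mem (Finset.mem_erase.2 ⟨h1.ne', h1M⟩))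
        (Finset.insert_subset (Finset.mem_insert_self _ _) hCM')⟩

/-- Degree-2 quadrilateral rule, asymmetric auxiliary version (n₁ ∈ M, n₂ ∉ M). -/
lemma quad_aux {C M : Finset V} {u v n₁ n₂ : V} (hMmin : IsMinVC G M) (hCM : C ⊆ M)
    (hu : u ∉ C)
    (hgu : gain G C u = 2) (h1u : G.Adj u n₁) (h2u : G.Adj u n₂) (h2v : G.Adj v n₂)
    (hne : n₁ ≠ n₂) (h1C : n₁ ∉ C) (h2C : n₂ ∉ C) (h1M : n₁ ∈ M) (h2M : n₂ ∉ M) :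
    ∃ M', IsMinVC G M' ∧ insert n₁ (insert n₂ C) ⊆ M' := by
  have huM : u ∈ M := (hMmin.1 h2u).resolve_right h2M
  set M' := insert n₂ (M.erase u) with hM'
  have key : ∀ ⦃a b : V⦄, G.Adj a b → a ∈ M → a ∈ M' ∨ b ∈ M' := by
    intro a b hab haM
    by_cases hau : a = u
    · subst hau
      by_cases hbM : b ∈ M
      · exact Or.inr (Finset.mem_insert_of_mem (Finset.mem_erase.2 ⟨hab.ne', hbM⟩))
      · have hbC : b ∉ C := fun h => hbM (hCM h)
        rcases gain2_neighbors G hgu hu h1u h2u hne h1C h2C hab hbC with rfl | rfl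
        · exact Or.inr (Finset.mem_insert_of_mem (Finset.mem_erase.2 ⟨h1u.ne', h1M⟩))
        · exact Or.inr (Finset.mem_insert_self _ _)
    · exact Or.inl (Finset.mem_insert_of_mem (Finset.mem_erase.2 ⟨hau, haM⟩))
  have hVC' : IsVC G M' := fun a b hab =>
    (hMmin.1 hab).elim (key hab) (fun h => (key hab.symm h).symm)
  have hcard : M'.card ≤ M.card := by
    have h1le : 1 ≤ M.card := Finset.card_pos.2 ⟨u, huM⟩
    calc M'.card ≤ (M.erase u).card + 1 := Finset.card_insert_le _ _
      _ = M.card := by rw [Finset.card_erase_of_mem huM]; omega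
  have hCM' : C ⊆ M' := fun c hc =>
    Finset.mem_insert_of_mem (Finset.mem_erase.2 ⟨fun h => hu (h ▸ hc), hCM hc⟩)
  exact ⟨M', minVC_of_le G hMmin hVC' hcard,
    Finset.insert_subset (Finset.mem_insert_of_mem (Finset.mem_erase.2 ⟨h1u.ne', h1M⟩))
      (Finset.insert_subset (Finset.mem_insert_self _ _) hCM')⟩

lemma step_invariant {C C' : Finset V} (h : Step G C C')
    (hM : ∃ M, IsMinVC G M ∧ C ⊆ M) : ∃ M, IsMinVC G M ∧ C' ⊆ M := by
  obtain ⟨M, hMmin, hCM⟩ := hM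
  cases h with
  | deg1 u v hu hg hv hvC =>
    have hadj : G.Adj u v := (SimpleGraph.mem_neighborFinset _ _ _).1 hv
    by_cases hvM : v ∈ M
    · exact ⟨M, hMmin, Finset.insert_subset hvM hCM⟩
    · have huM : u ∈ M := (hMmin.1 hadj).resolve_right hvM
      set M' := insert v (M.erase u) with hM'
      have key : ∀ ⦃a b : V⦄, G.Adj a b → a ∈ M → a ∈ M' ∨ b ∈ M' := by
        intro a b hab haM
        by_cases hau : a = u
        · subst hau
          by_cases hbM : b ∈ M
          · exact Or.inr (Finset.mem_insert_of_mem (Finset.mem_erase.2 ⟨hab.ne', hbM⟩))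
          · have hbC : b ∉ C := fun h => hbM (hCM h)
            have hbv : b = v := gain1_neighbor G hg hu hadj hvC hab hbC
            exact Or.inr (hbv ▸ Finset.mem_insert_self v _)
        · exact Or.inl (Finset.mem_insert_of_mem (Finset.mem_erase.2 ⟨hau, haM⟩))
      have hVC' : IsVC G M' := fun a b hab =>
        (hMmin.1 hab).elim (key hab) (fun h => (key hab.symm h).symm)
      have hcard : M'.card ≤ M.card := by
        have h1le : 1 ≤ M.card := Finset.card_pos.2 ⟨u, huM⟩
        calc M'.card ≤ (M.erase u).card + 1 := Finset.card_insert_le _ _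
          _ = M.card := by rw [Finset.card_erase_of_mem huM]; omega
      have hCM' : C ⊆ M' := fun c hc =>
        Finset.mem_insert_of_mem (Finset.mem_erase.2 ⟨fun h => hu (h ▸ hc), hCM hc⟩)
      exact ⟨M', minVC_of_le G hMmin hVC' hcard,
        Finset.insert_subset (Finset.mem_insert_self _ _) hCM'⟩
  | deg2tri v n₁ n₂ hv hg hn₁ hn₂ hne hn₁C hn₂C hadj =>
    have h1 : G.Adj v n₁ := (SimpleGraph.mem_neighborFinset _ _ _).1 hn₁
    have h2 : G.Adj v n₂ := (SimpleGraph.mem_neighborFinset _ _ _).1 hn₂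
    rcases hMmin.1 hadj with h1M | h2M
    · exact tri_aux G hMmin hCM hv hg h1 h2 hne hn₁C hn₂C h1M
    · obtain ⟨M', hM', hsub⟩ :=
        tri_aux G hMmin hCM hv hg h2 h1 hne.symm hn₂C hn₁C h2M
      exact ⟨M', hM', by rwa [Finset.insert_comm] at hsub⟩
  | deg2quad u v n₁ n₂ huv hu hv hgu hgv hn₁u hn₂u hn₁v hn₂v hne hn₁C hn₂C hnadj =>
    have h1u : G.Adj u n₁ := (SimpleGraph.mem_neighborFinset _ _ _).1 hn₁u
    have h2u : G.Adj u n₂ := (SimpleGraph.mem_neighborFinset _ _ _).1 hn₂u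
    have h1v : G.Adj v n₁ := (SimpleGraph.mem_neighborFinset _ _ _).1 hn₁v
    have h2v : G.Adj v n₂ := (SimpleGraph.mem_neighborFinset _ _ _).1 hn₂v
    by_cases h1M : n₁ ∈ M
    · by_cases h2M : n₂ ∈ M
      · exact ⟨M, hMmin, Finset.insert_subset h1M (Finset.insert_subset h2M hCM)⟩
      · exact quad_aux G hMmin hCM hu hgu h1u h2u h2v hne hn₁C hn₂C h1M h2M
    · by_cases h2M : n₂ ∈ M
      · obtain ⟨M', hM', hsub⟩ := quad_aux G hMmin hCM hu hgu h2u h1u h1v hne.symm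
          hn₂C hn₁C h2M h1M
        exact ⟨M', hM', by rwa [Finset.insert_comm] at hsub⟩
      · -- both n₁, n₂ outside M, so u and v are both in M
        have huM : u ∈ M := (hMmin.1 h1u).resolve_right h1M
        have hvM : v ∈ M := (hMmin.1 h1v).resolve_right h1M
        have hnuv : ¬ G.Adj u v := by
          intro hadj
          rcases gain2_neighbors G hgu hu h1u h2u hne hn₁C hn₂C hadj hv with rfl | rfl
          · exact G.irrefl h1v
          · exact G.irrefl h2v
        set M' := insert n₁ (insert n₂ ((M.erase u).erase v)) with hM'
        have hmemE : ∀ ⦃a : V⦄, a ∈ M → a ≠ u → a ≠ v → a ∈ M' := fun a haM hau hav =>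
          Finset.mem_insert_of_mem (Finset.mem_insert_of_mem
            (Finset.mem_erase.2 ⟨hav, Finset.mem_erase.2 ⟨hau, haM⟩⟩))
        have key : ∀ ⦃a b : V⦄, G.Adj a b → a ∈ M → a ∈ M' ∨ b ∈ M' := by
          intro a b hab haM
          by_cases hau : a = u
          · subst hau
            by_cases hbM : b ∈ M
            · have hbv : b ≠ v := fun h => hnuv (h ▸ hab)
              exact Or.inr (hmemE hbM hab.ne' hbv)
            · have hbC : b ∉ C := fun h => hbM (hCM h)
              rcases gain2_neighbors G hgu hu h1u h2u hne hn₁C hn₂C hab hbC with rfl | rfl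
              · exact Or.inr (Finset.mem_insert_self _ _)
              · exact Or.inr (Finset.mem_insert_of_mem (Finset.mem_insert_self _ _))
          · by_cases hav : a = v
            · subst hav
              by_cases hbM : b ∈ M
              · have hbu : b ≠ u := fun h => hnuv (h ▸ hab).symm
                exact Or.inr (hmemE hbM hbu hab.ne')
              · have hbC : b ∉ C := fun h => hbM (hCM h)
                rcases gain2_neighbors G hgv hv h1v h2v hne hn₁C hn₂C hab hbC with rfl | rfl
                · exact Or.inr (Finset.mem_insert_self _ _)
                · exact Or.inr (Finset.mem_insert_of_mem (Finset.mem_insert_self _ _))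
            · exact Or.inl (hmemE haM hau hav)
        have hVC' : IsVC G M' := fun a b hab =>
          (hMmin.1 hab).elim (key hab) (fun h => (key hab.symm h).symm)
        have hcard : M'.card ≤ M.card := by
          have h2le : 2 ≤ M.card := Finset.one_lt_card.2 ⟨u, huM, v, hvM, huv⟩
          have hvMe : v ∈ M.erase u := Finset.mem_erase.2 ⟨Ne.symm huv, hvM⟩
          calc M'.card ≤ (insert n₂ ((M.erase u).erase v)).card + 1 :=
                Finset.card_insert_le _ _
            _ ≤ ((M.erase u).erase v).card + 1 + 1 := by
                have := Finset.card_insert_le n₂ ((M.erase u).erase v); omega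
            _ = M.card := by
                rw [Finset.card_erase_of_mem hvMe, Finset.card_erase_of_mem huM]; omega
        have hCM' : C ⊆ M' := fun c hc =>
          hmemE (hCM hc) (fun h => hu (h ▸ hc)) (fun h => hv (h ▸ hc))
        exact ⟨M', minVC_of_le G hMmin hVC' hcard,
          Finset.insert_subset (Finset.mem_insert_self _ _)
            (Finset.insert_subset (Finset.mem_insert_of_mem (Finset.mem_insert_self _ _)) hCM')⟩

lemma reach_invariant {C : Finset V} (hreach : Relation.ReflTransGen (Step G) ∅ C) :
    ∃ M, IsMinVC G M ∧ C ⊆ M := by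
  induction hreach with
  | refl =>
    obtain ⟨M, hM⟩ := exists_minVC G
    exact ⟨M, hM, Finset.empty_subset M⟩
  | tail hsteps hstep ih => exact step_invariant G hstep ih

theorem rules_give_min_cover (C : Finset V)
    (hreach : Relation.ReflTransGen (Step G) ∅ C) (hC : IsVC G C) :
    IsMinVC G C := by
  obtain ⟨M, hMmin, hCM⟩ := reach_invariant G hreach
  exact ⟨hC, fun D hD => (Finset.card_le_card hCM).trans (hMmin.2 D hD)⟩
end
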